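/- arXiv:2308.11427 — 2 statements merged into one kernel-verified Lean document; each statement's English description precedes it below -/
import Mathlib

section
/- Let k be a field, n ≥ 2, and f a permutation of {1,…,n}. The center of the Yang–Baxter algebra A(k,X,r_f) of the permutation idempotent solution (X, r_f) is trivial, i.e. it equals k·1 (the image of the ground field). -/
noncomputable section

open FreeAlgebra

/-- The defining relations of the Yang–Baxter algebra of the permutation idempotent
solution `r_f(x,y) = (f(y), y)`. -/
def ybRel (k : Type*) [Field k] (n : ℕ) (f : Equiv.Perm (Fin n)) :
    FreeAlgebra k (Fin n) → FreeAlgebra k (Fin n) → Prop :=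
  fun a b => ∃ j p : Fin n, a = ι k j * ι k p ∧ b = ι k (f p) * ι k p

/-- The Yang–Baxter algebra `A(k, X, r_f)`. -/
abbrev YBA (k : Type*) [Field k] (n : ℕ) (f : Equiv.Perm (Fin n)) :=
  RingQuot (ybRel k n f)

/-!
Since `x_j x_p = x_{f p} x_p` for every `j`, any two words of the same length ending in the same
letter are equal in `A(k,X,r_f)`; in particular `x_p x_q = x_q x_q`, so every word of length `m + 1`
ending in `x_p` equals `x_p ^ (m + 1)`. These normal forms are linearly independent: `A(k,X,r_f)`
is the monoid algebra of the monoid of normal forms. If `z` is central and `q ≠ p` (possible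
since `n ≥ 2`), compare the coefficients of `x_p ^ (m + 2)` in `x_q z` and `z x_q`: in the first
it is the coefficient of `x_p ^ (m + 1)` in `z`, in the second it is `0`, because every word of
`z x_q` ends in `x_q`. Hence `z` is a scalar.
-/

open MonoidAlgebra

/-- `⟨m, p⟩` stands for the normal form `x_p ^ (m + 1)` of the words of length `m + 1` ending in
`x_p`. -/
@[ext]
structure NormalWord (n : ℕ) where
  len : ℕ
  last : Fin n

namespace NormalWord

variable {n : ℕ}

instance : Mul (NormalWord n) := ⟨fun a b => ⟨a.len + b.len + 1, b.last⟩⟩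

lemma mul_def (a b : NormalWord n) : a * b = ⟨a.len + b.len + 1, b.last⟩ := rfl

instance : Semigroup (NormalWord n) where
  mul_assoc a b c := by
    simp only [mul_def, mk.injEq, and_true]
    omega

lemma coe_mk_zero_mul_eq_coe_succ_iff (q : Fin n) (s : NormalWord n)
    (m : WithOne (NormalWord n)) :
    ((⟨0, q⟩ : NormalWord n) : WithOne (NormalWord n)) * m =
        ↑(⟨s.len + 1, s.last⟩ : NormalWord n) ↔ m = s := by
  induction m using WithOne.recOneCoe with
  | one => simp [NormalWord.ext_iff]
  | coe a =>
    rw [← WithOne.coe_mul, WithOne.coe_inj, WithOne.coe_inj, mul_def]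
    simp only [NormalWord.ext_iff]
    omega

lemma mul_coe_mk_ne_coe_of_ne {p q : Fin n} (hq : q ≠ p) (m l : ℕ)
    (d : WithOne (NormalWord n)) :
    d * ((⟨l, q⟩ : NormalWord n) : WithOne (NormalWord n)) ≠
      ↑(⟨m, p⟩ : NormalWord n) := by
  induction d using WithOne.recOneCoe with
  | one => simp [hq]
  | coe d => simp [← WithOne.coe_mul, mul_def, hq]

lemma coeff_coe_eq_zero_of_commute {R : Type*} [Semiring R]
    {x : MonoidAlgebra R (WithOne (NormalWord n))} {q : Fin n} {s : NormalWord n}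
    (hq : q ≠ s.last)
    (hx : Commute (single ((⟨0, q⟩ : NormalWord n) : WithOne (NormalWord n)) 1) x) :
    x.coeff s = 0 := by
  have h := congr_arg (·.coeff ((⟨s.len + 1, s.last⟩ : NormalWord n) : WithOne (NormalWord n)))
    hx.eq
  rwa [coeff_single_mul_eq_mul_coeff (s : WithOne (NormalWord n))
      fun m _ => coe_mk_zero_mul_eq_coe_succ_iff q s m,
    coeff_mul_single_of_forall_mul_ne _ _ (mul_coe_mk_ne_coe_of_ne hq _ _), one_mul]
    at h

end NormalWord

lemma MonoidAlgebra.eq_algebraMap_coeff_one_of_coeff_eq_zero {R M : Type*} [CommSemiring R]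
    [Monoid M] {x : MonoidAlgebra R M} (hx : ∀ m ≠ 1, x.coeff m = 0) :
    x = algebraMap R (MonoidAlgebra R M) (x.coeff 1) := by
  ext m
  rw [coe_algebraMap, Function.comp_apply, Algebra.algebraMap_self, RingHom.id_apply,
    coeff_single]
  by_cases hm : m = 1
  · simp [hm]
  · simp [hx m hm, Finsupp.single_eq_of_ne hm]

namespace YBA

variable (k : Type*) [Field k] {n : ℕ} (f : Equiv.Perm (Fin n))

def gen (i : Fin n) : YBA k n f := RingQuot.mkAlgHom k (ybRel k n f) (ι k i)

lemma gen_mul_gen_eq_of_rel (j p : Fin n) :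
    gen k f j * gen k f p = gen k f (f p) * gen k f p := by
  have h : ybRel k n f (ι k j * ι k p) (ι k (f p) * ι k p) := ⟨j, p, rfl, rfl⟩
  simpa only [gen, map_mul] using RingQuot.mkAlgHom_rel k h

lemma gen_mul_gen (p q : Fin n) : gen k f p * gen k f q = gen k f q * gen k f q := by
  rw [gen_mul_gen_eq_of_rel k f p q, gen_mul_gen_eq_of_rel k f q q]

lemma gen_mul_gen_pow (p q : Fin n) (l : ℕ) :
    gen k f p * gen k f q ^ (l + 1) = gen k f q ^ (l + 2) := by
  rw [pow_succ', ← mul_assoc, gen_mul_gen, mul_assoc, ← pow_succ', ← pow_succ']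

lemma gen_pow_mul_gen_pow (p q : Fin n) (m l : ℕ) :
    gen k f p ^ (m + 1) * gen k f q ^ (l + 1) = gen k f q ^ (m + l + 2) := by
  induction m generalizing l with
  | zero => simpa using gen_mul_gen_pow k f p q l
  | succ m ih =>
    rw [pow_succ, mul_assoc, gen_mul_gen_pow, ih (l + 1)]
    congr 1
    omega

def evalNormalWord : NormalWord n →ₙ* YBA k n f where
  toFun s := gen k f s.last ^ (s.len + 1)
  map_mul' a b := gen_pow_mul_gen_pow k f a.last b.last a.len b.len |>.symm

def ofMonoidAlgebra : MonoidAlgebra k (WithOne (NormalWord n)) →ₐ[k] YBA k n f :=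
  MonoidAlgebra.lift k (YBA k n f) _ (WithOne.lift (evalNormalWord k f))

def toMonoidAlgebra : YBA k n f →ₐ[k] MonoidAlgebra k (WithOne (NormalWord n)) :=
  RingQuot.liftAlgHom k
    ⟨FreeAlgebra.lift k fun i => single (↑(⟨0, i⟩ : NormalWord n) : WithOne (NormalWord n)) 1,
      by
      rintro _ _ ⟨j, p, rfl, rfl⟩
      simp only [map_mul, FreeAlgebra.lift_ι_apply, single_mul_single, one_mul,
        ← WithOne.coe_mul, NormalWord.mul_def]⟩

lemma toMonoidAlgebra_gen (i : Fin n) :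
    toMonoidAlgebra k f (gen k f i) =
      single ((⟨0, i⟩ : NormalWord n) : WithOne (NormalWord n)) 1 := by
  rw [gen, toMonoidAlgebra, RingQuot.liftAlgHom_mkAlgHom_apply, FreeAlgebra.lift_ι_apply]

lemma ofMonoidAlgebra_toMonoidAlgebra (a : YBA k n f) :
    ofMonoidAlgebra k f (toMonoidAlgebra k f a) = a := by
  suffices h : (ofMonoidAlgebra k f).comp (toMonoidAlgebra k f) = AlgHom.id k (YBA k n f) from
    DFunLike.congr_fun h a
  refine RingQuot.ringQuot_ext' _ _ _ <| FreeAlgebra.hom_ext <| funext fun i => ?_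
  change ofMonoidAlgebra k f (toMonoidAlgebra k f (gen k f i)) = gen k f i
  rw [toMonoidAlgebra_gen, ofMonoidAlgebra, lift_single, one_smul, WithOne.lift_coe]
  exact pow_one _

end YBA

/-- for `n ≥ 2` the center of the Yang–Baxter algebra `A(k,X,r_f)`
is trivial, i.e. it is `k·1`. -/
theorem stmt_13 (k : Type*) [Field k] (n : ℕ) (hn : 2 ≤ n) (f : Equiv.Perm (Fin n)) :
    Subalgebra.center k (YBA k n f) = ⊥ := by
  have : Nontrivial (Fin n) := Fin.nontrivial_iff_two_le.mpr hn
  refine le_antisymm (fun z hz => ?_) bot_le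
  set w := YBA.toMonoidAlgebra k f z
  have hw : ∀ m ≠ 1, w.coeff m = 0 := by
    intro m hm
    obtain ⟨s, rfl⟩ := WithOne.ne_one_iff_exists.mp hm
    obtain ⟨q, hq⟩ := exists_ne s.last
    refine NormalWord.coeff_coe_eq_zero_of_commute hq ?_
    rw [← YBA.toMonoidAlgebra_gen k f]
    exact Commute.map (Subalgebra.mem_center_iff.mp hz _) _
  refine Algebra.mem_bot.mpr ⟨w.coeff 1, ?_⟩
  rw [← AlgHom.commutes (YBA.ofMonoidAlgebra k f),
    ← eq_algebraMap_coeff_one_of_coeff_eq_zero hw, YBA.ofMonoidAlgebra_toMonoidAlgebra]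

end
end

section
/- Let k be a field, n ≥ 1, f a permutation of {1,…,n}, A = A(k,X,r_f), and A⁺ the two-sided ideal of A generated by x₁,…,x_n. Every nonzero element a of A can be written uniquely in the normal basis as a = a₀ + Σ_{d=1}^{p} Σ_{i=1}^{n} α_{d i} x₁^{d−1} x_i with a₀, α_{d i} ∈ k. Then: (1) if a, b ∈ A are nonzero and a b = 0, then a, b ∈ A⁺ (i.e. a₀ = 0 and likewise for b) and Σ_{i=1}^{n} α_{d i} = 0 for every 1 ≤ d ≤ p; (2) conversely, if a ∈ A⁺ satisfies Σ_{i=1}^{n} α_{d i} = 0 for every d, then a b = 0 for every b ∈ A⁺. In particular, a nonzero a ∈ A is a left zero divisor if and only if a annihilates A⁺ from the left. -/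
noncomputable section

open FreeAlgebra

/-- The image of the generator `x_i` in `A(k, X, r_f)`. -/
def xgen (k : Type*) [Field k] (n : ℕ) (f : Equiv.Perm (Fin n)) (i : Fin n) :
    YBA k n f :=
  RingQuot.mkAlgHom k (ybRel k n f) (ι k i)

/-- The augmentation ideal `A⁺`, the two-sided ideal generated by `x₁, …, xₙ`. -/
def Aplus (k : Type*) [Field k] (n : ℕ) (f : Equiv.Perm (Fin n)) :
    TwoSidedIdeal (YBA k n f) :=
  TwoSidedIdeal.span (Set.range (xgen k n f))

/-!
Attach to `a ∈ A` its augmentation `ε a ∈ k`, its image `D a ∈ k[X]` under `xᵢ ↦ X`, and its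
columns `R a ∈ k[X]ⁿ` (`augmentation`, `toPolynomial`, `toColumns` below), where
`R a i = ∑_d α_{d i} X^(d-1)` collects the normal-form coefficients in front of `xᵢ`.
The assignment `a ↦ !![ε a, 0; R a, D a]` is a representation of `A` by lower triangular
matrices (both `x_j x_p` and `x_{f p} x_p` go to a matrix with lower-left entry `X eₚ`),
so `R (a b) = ε b • R a + D a • R b`, and `a` is recovered from `(ε a, R a)` via the normal form.
If `a b = 0` with `a, b ≠ 0`, then `D a * D b = 0` in the domain `k[X]`, and the column formula
forces `D a = 0` and `ε b = 0`; conversely these two conditions give `a b = 0`. Finally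
`A⁺ = ker ε` and `D a = a₀ + ∑_d (∑_i α_{d i}) X^d`.
-/

open Polynomial Pointwise

namespace YBA

variable (k : Type*) [Field k] (n : ℕ) (f : Equiv.Perm (Fin n))

def augmentation : YBA k n f →ₐ[k] k :=
  RingQuot.liftAlgHom k ⟨FreeAlgebra.lift k fun _ => 0, by
    rintro _ _ ⟨j, p, rfl, rfl⟩
    simp⟩

def toPolynomial : YBA k n f →ₐ[k] k[X] :=
  RingQuot.liftAlgHom k ⟨FreeAlgebra.lift k fun _ => X, by
    rintro _ _ ⟨j, p, rfl, rfl⟩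
    simp⟩

def toMatrix : YBA k n f →ₐ[k] Matrix (Fin 2) (Fin 2) (Fin n → k[X]) :=
  RingQuot.liftAlgHom k
    ⟨FreeAlgebra.lift k fun i => !![0, 0; Pi.single i 1, algebraMap k[X] _ X], by
    rintro _ _ ⟨j, p, rfl, rfl⟩
    simp⟩

def toColumns : YBA k n f →ₗ[k] (Fin n → k[X]) :=
  Matrix.entryLinearMap k (Fin n → k[X]) 1 0 ∘ₗ (toMatrix k n f).toLinearMap

variable {k n f}

@[simp] lemma augmentation_xgen (i : Fin n) : augmentation k n f (xgen k n f i) = 0 := by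
  simp [augmentation, xgen]

@[simp] lemma toPolynomial_xgen (i : Fin n) : toPolynomial k n f (xgen k n f i) = X := by
  simp [toPolynomial, xgen]

@[simp] lemma toMatrix_xgen (i : Fin n) :
    toMatrix k n f (xgen k n f i) = !![0, 0; Pi.single i 1, algebraMap k[X] _ X] := by
  simp [toMatrix, xgen]

lemma toColumns_apply (a : YBA k n f) : toColumns k n f a = toMatrix k n f a 1 0 := rfl

@[simp] lemma toColumns_one : toColumns k n f 1 = 0 := by
  simp [toColumns_apply]

@[simp] lemma toColumns_xgen (i : Fin n) : toColumns k n f (xgen k n f i) = Pi.single i 1 := by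
  simp [toColumns_apply]

lemma eval_zero_toPolynomial (a : YBA k n f) :
    (toPolynomial k n f a).eval 0 = augmentation k n f a := by
  have : (aeval (0 : k)).comp (toPolynomial k n f) = augmentation k n f := by
    ext i
    change eval 0 (toPolynomial k n f (xgen k n f i)) = augmentation k n f (xgen k n f i)
    simp
  simpa [coe_aeval_eq_eval] using congrArg (· a) this

lemma toMatrix_entries (a : YBA k n f) :
    toMatrix k n f a 0 0 = algebraMap k _ (augmentation k n f a) ∧ toMatrix k n f a 0 1 = 0 ∧
      toMatrix k n f a 1 1 = algebraMap k[X] _ (toPolynomial k n f a) := by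
  obtain ⟨y, rfl⟩ := RingQuot.mkAlgHom_surjective k (ybRel k n f) a
  induction y using FreeAlgebra.induction with
  | grade0 r =>
    simp only [AlgHom.commutes, Matrix.algebraMap_matrix_apply]
    exact ⟨rfl, rfl, IsScalarTower.algebraMap_apply k k[X] _ r⟩
  | grade1 i =>
    rw [← xgen]
    simp
  | mul x y hx hy =>
    obtain ⟨hx₀₀, hx₀₁, hx₁₁⟩ := hx
    obtain ⟨hy₀₀, hy₀₁, hy₁₁⟩ := hy
    simp [Matrix.mul_apply, Fin.sum_univ_two, hx₀₀, hx₀₁, hx₁₁, hy₀₀, hy₀₁, hy₁₁]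
  | add x y hx hy =>
    obtain ⟨hx₀₀, hx₀₁, hx₁₁⟩ := hx
    obtain ⟨hy₀₀, hy₀₁, hy₁₁⟩ := hy
    simp [hx₀₀, hx₀₁, hx₁₁, hy₀₀, hy₀₁, hy₁₁]

lemma toColumns_mul (a b : YBA k n f) :
    toColumns k n f (a * b) =
      augmentation k n f b • toColumns k n f a + toPolynomial k n f a • toColumns k n f b := by
  obtain ⟨-, -, ha₁₁⟩ := toMatrix_entries a
  obtain ⟨hb₀₀, -, -⟩ := toMatrix_entries b
  simp only [toColumns_apply, map_mul, Matrix.mul_apply, Fin.sum_univ_two, ha₁₁, hb₀₀,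
    Algebra.smul_def, mul_comm (toMatrix k n f a 1 0)]

lemma xgen_ne_zero (i : Fin n) : xgen k n f i ≠ 0 := fun h =>
  X_ne_zero (R := k) (by simpa [h] using (toPolynomial_xgen (k := k) (f := f) i).symm)

lemma xgen_mul_xgen (i j p : Fin n) :
    xgen k n f i * xgen k n f p = xgen k n f j * xgen k n f p := by
  have h (i : Fin n) : xgen k n f i * xgen k n f p =
      RingQuot.mkAlgHom k (ybRel k n f) (ι k (f p) * ι k p) := by
    rw [xgen, xgen, ← map_mul]
    exact RingQuot.mkAlgHom_rel k ⟨i, p, rfl, rfl⟩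
  rw [h i, h j]

variable [NeZero n]

lemma xgen_mul_normalWord (i : Fin n) (e : ℕ) (j : Fin n) :
    xgen k n f i * (xgen k n f 0 ^ e * xgen k n f j) = xgen k n f 0 ^ (e + 1) * xgen k n f j := by
  cases e with
  | zero => simp [xgen_mul_xgen i 0 j]
  | succ e =>
    simp only [pow_succ', mul_assoc]
    rw [← mul_assoc (xgen k n f i), xgen_mul_xgen i 0 0, mul_assoc]

variable (k n f) in
def normalWords : Set (YBA k n f) :=
  insert 1 (Set.range fun w : ℕ × Fin n => xgen k n f 0 ^ w.1 * xgen k n f w.2)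

lemma normalWords_mul_subset : normalWords k n f * normalWords k n f ⊆ normalWords k n f := by
  refine Set.mul_subset_iff.2 fun u hu v hv => ?_
  rcases hu with rfl | ⟨⟨d, i⟩, rfl⟩
  · rwa [one_mul]
  rcases hv with rfl | ⟨⟨e, j⟩, rfl⟩
  · rw [mul_one]; exact Or.inr ⟨(d, i), rfl⟩
  refine Or.inr ⟨(d + e + 1, j), ?_⟩
  simp only [mul_assoc, xgen_mul_normalWord, pow_add, pow_one]

lemma span_normalWords : Submodule.span k (normalWords k n f) = ⊤ := by
  set W := Submodule.span k (normalWords k n f)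
  have hW : W * W ≤ W := by
    rw [Submodule.span_mul_span]
    exact Submodule.span_mono normalWords_mul_subset
  refine Submodule.eq_top_iff'.2 fun a => ?_
  obtain ⟨y, rfl⟩ := RingQuot.mkAlgHom_surjective k (ybRel k n f) a
  induction y using FreeAlgebra.induction with
  | grade0 r =>
    rw [AlgHom.commutes, Algebra.algebraMap_eq_smul_one]
    exact W.smul_mem r (Submodule.subset_span (Set.mem_insert _ _))
  | grade1 i =>
    exact Submodule.subset_span (Or.inr ⟨(0, i), by simp [xgen]⟩)
  | mul x y hx hy => rw [map_mul]; exact hW (Submodule.mul_mem_mul hx hy)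
  | add x y hx hy => rw [map_add]; exact W.add_mem hx hy

lemma toColumns_normalWord (d : ℕ) (i : Fin n) :
    toColumns k n f (xgen k n f 0 ^ d * xgen k n f i) = Pi.single i (X ^ d) := by
  simp [toColumns_mul, ← Pi.single_smul']

lemma eq_normalForm (a : YBA k n f) :
    a = algebraMap k _ (augmentation k n f a) +
      ∑ i, aeval (xgen k n f 0) (toColumns k n f a i) * xgen k n f i := by
  have ha : a ∈ Submodule.span k (normalWords k n f) := by simp [span_normalWords]
  induction ha using Submodule.span_induction with
  | mem x hx =>
    rcases hx with rfl | ⟨⟨d, i⟩, rfl⟩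
    · simp
    · simp [toColumns_normalWord, Pi.single_apply, apply_ite, ite_mul]
  | zero => simp
  | add x y _ _ hx hy =>
    conv_lhs => rw [hx, hy]
    simp only [map_add, Pi.add_apply, add_mul, Finset.sum_add_distrib]
    abel
  | smul c x _ hx =>
    conv_lhs => rw [hx]
    simp [Finset.smul_sum, smul_add, Algebra.algebraMap_eq_smul_one, mul_smul]

lemma eq_zero_iff {a : YBA k n f} :
    a = 0 ↔ augmentation k n f a = 0 ∧ toColumns k n f a = 0 := by
  refine ⟨by rintro rfl; simp, fun ⟨hε, hR⟩ => ?_⟩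
  rw [eq_normalForm a, hε, hR]
  simp

lemma mem_Aplus_iff {a : YBA k n f} : a ∈ Aplus k n f ↔ augmentation k n f a = 0 := by
  refine ⟨fun ha => TwoSidedIdeal.mem_ker _ |>.1 ?_, fun hε => ?_⟩
  · refine TwoSidedIdeal.span_le.2 ?_ ha
    rintro _ ⟨i, rfl⟩
    exact (TwoSidedIdeal.mem_ker _).2 (augmentation_xgen i)
  · rw [eq_normalForm a, hε, map_zero, zero_add]
    exact TwoSidedIdeal.finsetSum_mem _ _ _ fun i _ =>
      TwoSidedIdeal.mul_mem_left _ _ _ (TwoSidedIdeal.subset_span ⟨i, rfl⟩)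

omit [NeZero n] in
lemma augmentation_eq_zero_of_toPolynomial_eq_zero {a : YBA k n f}
    (ha : toPolynomial k n f a = 0) : augmentation k n f a = 0 := by
  rw [← eval_zero_toPolynomial, ha, eval_zero]

lemma mul_eq_zero_of_toPolynomial_eq_zero {a b : YBA k n f} (ha : toPolynomial k n f a = 0)
    (hb : augmentation k n f b = 0) : a * b = 0 := by
  rw [eq_zero_iff, map_mul, toColumns_mul, ha, hb]
  simp

lemma toPolynomial_eq_zero_of_mul_eq_zero {a b : YBA k n f} (ha : a ≠ 0) (hb : b ≠ 0)
    (hab : a * b = 0) : toPolynomial k n f a = 0 ∧ augmentation k n f b = 0 := by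
  have hcols : augmentation k n f b • toColumns k n f a + toPolynomial k n f a • toColumns k n f b
      = 0 := by
    rw [← toColumns_mul, hab, map_zero]
  have hDa : toPolynomial k n f a = 0 := by
    by_contra hDa
    have hDb : toPolynomial k n f b = 0 :=
      (mul_eq_zero.1 (by rw [← map_mul, hab, map_zero])).resolve_left hDa
    have hεb := augmentation_eq_zero_of_toPolynomial_eq_zero hDb
    rw [hεb, zero_smul, zero_add] at hcols
    exact hb (eq_zero_iff.2 ⟨hεb, (smul_eq_zero.1 hcols).resolve_left hDa⟩)
  refine ⟨hDa, ?_⟩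
  rw [hDa, zero_smul, add_zero] at hcols
  have hεa := augmentation_eq_zero_of_toPolynomial_eq_zero hDa
  exact (smul_eq_zero.1 hcols).resolve_right fun h => ha (eq_zero_iff.2 ⟨hεa, h⟩)

lemma toPolynomial_sum_normalWord (p : ℕ) (α : ℕ → Fin n → k) :
    toPolynomial k n f
        (∑ d ∈ Finset.Icc 1 p, ∑ i, α d i • (xgen k n f 0 ^ (d - 1) * xgen k n f i)) =
      ∑ d ∈ Finset.Icc 1 p, (∑ i, α d i) • X ^ d := by
  simp only [map_sum, map_smul, map_mul, map_pow, toPolynomial_xgen, Finset.sum_smul]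
  refine Finset.sum_congr rfl fun d hd => ?_
  rw [pow_sub_one_mul (by grind)]

end YBA

lemma Polynomial.coeff_sum_smul_X_pow {R : Type*} [Semiring R] (s : Finset ℕ) (c : ℕ → R)
    (e : ℕ) : (∑ d ∈ s, c d • X ^ d).coeff e = if e ∈ s then c e else 0 := by
  simp [finsetSum_coeff, coeff_X_pow]

open YBA in
/-- (1) if `a b = 0` with `a, b ≠ 0` then `a, b ∈ A⁺` and in any
normal-basis representation `a = a₀ + Σ_{d=1}^{p} Σᵢ α_{d i} x₁^{d−1} xᵢ` one has
`a₀ = 0` and `Σᵢ α_{d i} = 0` for every `1 ≤ d ≤ p`; (2) conversely such an `a`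
annihilates `A⁺` from the left; in particular a nonzero `a` is a left zero divisor
iff it annihilates `A⁺`. -/
theorem stmt_14 (k : Type*) [Field k] (n : ℕ) [NeZero n] (f : Equiv.Perm (Fin n)) :
    (∀ a b : YBA k n f, a ≠ 0 → b ≠ 0 → a * b = 0 →
      a ∈ Aplus k n f ∧ b ∈ Aplus k n f ∧
      ∀ (a₀ : k) (p : ℕ) (α : ℕ → Fin n → k),
        a = algebraMap k (YBA k n f) a₀ +
            ∑ d ∈ Finset.Icc 1 p, ∑ i, α d i • ((xgen k n f 0) ^ (d - 1) * xgen k n f i) →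
        a₀ = 0 ∧ ∀ d : ℕ, 1 ≤ d → d ≤ p → ∑ i, α d i = 0) ∧
    (∀ (p : ℕ) (α : ℕ → Fin n → k),
      (∀ d : ℕ, 1 ≤ d → d ≤ p → ∑ i, α d i = 0) →
      ∀ b ∈ Aplus k n f,
        (∑ d ∈ Finset.Icc 1 p, ∑ i, α d i • ((xgen k n f 0) ^ (d - 1) * xgen k n f i)) * b
          = 0) ∧
    (∀ a : YBA k n f, a ≠ 0 →
      ((∃ b : YBA k n f, b ≠ 0 ∧ a * b = 0) ↔ ∀ b ∈ Aplus k n f, a * b = 0)) := by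
  refine ⟨fun a b ha hb hab => ?_, fun p α hα b hb => ?_, fun a ha => ⟨?_, fun h => ?_⟩⟩
  · obtain ⟨hDa, hεb⟩ := toPolynomial_eq_zero_of_mul_eq_zero ha hb hab
    have hεa := augmentation_eq_zero_of_toPolynomial_eq_zero hDa
    refine ⟨mem_Aplus_iff.2 hεa, mem_Aplus_iff.2 hεb, fun a₀ p α hrep => ?_⟩
    obtain rfl : a₀ = 0 := by simpa [hrep] using hεa
    rw [hrep, map_zero, zero_add, toPolynomial_sum_normalWord] at hDa
    refine ⟨rfl, fun d hd₁ hd₂ => ?_⟩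
    simpa [coeff_sum_smul_X_pow, hd₁, hd₂] using congrArg (coeff · d) hDa
  · refine mul_eq_zero_of_toPolynomial_eq_zero ?_ (mem_Aplus_iff.1 hb)
    rw [toPolynomial_sum_normalWord]
    exact Finset.sum_eq_zero fun d hd => by
      rw [hα d (Finset.mem_Icc.1 hd).1 (Finset.mem_Icc.1 hd).2, zero_smul]
  · rintro ⟨b, hb, hab⟩ c hc
    exact mul_eq_zero_of_toPolynomial_eq_zero (toPolynomial_eq_zero_of_mul_eq_zero ha hb hab).1
      (mem_Aplus_iff.1 hc)
  · exact ⟨xgen k n f 0, xgen_ne_zero 0, h _ (TwoSidedIdeal.subset_span ⟨0, rfl⟩)⟩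

end
end
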